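/- Let E = ℂ² with basis e₁, e₂, equipped with the dendriform algebra structure Dend₂⁸ given by the bilinear operations ≺, ≻ determined on basis elements by e₁ ≺ e₁ = e₁ + e₂, e₁ ≺ e₂ = −e₂, e₂ ≺ e₂ = e₂, e₁ ≻ e₁ = −e₂, e₁ ≻ e₂ = e₂ (all other products of basis elements are 0). A linear operator P : E → E is a Nijenhuis operator on (E, ≺, ≻) if and only if there exist b, d ∈ ℂ such that P(e₁) = (b + d)·e₁ + b·e₂ and P(e₂) = d·e₂. -/

import Mathlib

/-!
Writing `P` through its columns `P e₁ = (a, b)`, `P e₂ = (c, d)`, both Nijenhuis identities become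
polynomial identities in `a, b, c, d` and the coordinates of `u, v`. The identity for `≻` at
`(e₁, e₂)` gives `c² = 0`, and then the one for `≺` at `(e₁, e₁)` gives `(a - b - d)² = 0`;
conversely, for `c = 0` and `a = b + d` both identities hold identically.
-/

def IsNijenhuis {M : Type*} [AddGroup M] (μ : M → M → M) (P : M → M) : Prop :=
  ∀ u v, μ (P u) (P v) = P (μ (P u) v + μ u (P v) - P (μ u v))

variable {R : Type*} [CommRing R]

section Coordinates

variable {M : Type*} [AddCommGroup M] [Module R M]

theorem LinearMap.apply_eq_fst_smul_add_snd_smul (f : (R × R) →ₗ[R] M) (x : R × R) :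
    f x = x.1 • f (1, 0) + x.2 • f (0, 1) := by
  rw [← map_smul, ← map_smul, ← map_add]
  congr 1
  ext <;> simp

theorem LinearMap.apply₂_eq_sum_smul (μ : (R × R) →ₗ[R] (R × R) →ₗ[R] M) (u v : R × R) :
    μ u v = (u.1 * v.1) • μ (1, 0) (1, 0) + (u.1 * v.2) • μ (1, 0) (0, 1) +
      (u.2 * v.1) • μ (0, 1) (1, 0) + (u.2 * v.2) • μ (0, 1) (0, 1) := by
  rw [μ.apply_eq_fst_smul_add_snd_smul u, LinearMap.add_apply, LinearMap.smul_apply,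
    LinearMap.smul_apply, (μ (1, 0)).apply_eq_fst_smul_add_snd_smul v,
    (μ (0, 1)).apply_eq_fst_smul_add_snd_smul v]
  module

end Coordinates

def colOp (p q : R × R) (x : R × R) : R × R := x.1 • p + x.2 • q

namespace Dend28

/-! The operations `≺` and `≻` of `Dend₂⁸` in the coordinates of `e₁ = (1, 0)`, `e₂ = (0, 1)`. -/

def prec (u v : R × R) : R × R := (u.1 * v.1, u.1 * v.1 - u.1 * v.2 + u.2 * v.2)

def succ (u v : R × R) : R × R := (0, u.1 * v.2 - u.1 * v.1)

theorem eq_of_isNijenhuis [NoZeroDivisors R] {p q : R × R}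
    (hprec : IsNijenhuis prec (colOp p q)) (hsucc : IsNijenhuis succ (colOp p q)) :
    q.1 = 0 ∧ p.1 = p.2 + q.2 := by
  obtain ⟨a, b⟩ := p
  obtain ⟨c, d⟩ := q
  have h₁ := congrArg Prod.fst (hsucc (1, 0) (0, 1))
  have h₂ := congrArg Prod.snd (hprec (1, 0) (1, 0))
  simp only [prec, succ, colOp, Prod.smul_mk, Prod.mk_add_mk, Prod.mk_sub_mk, smul_eq_mul]
    at h₁ h₂
  have hc : c = 0 := mul_self_eq_zero.mp (by linear_combination h₁)
  subst hc
  have had : (a - b - d) * (a - b - d) = 0 := by linear_combination h₂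
  exact ⟨rfl, by linear_combination mul_self_eq_zero.mp had⟩

theorem isNijenhuis_prec_colOp {b d : R} :
    IsNijenhuis prec (colOp (b + d, b) (0, d)) := by
  intro u v
  simp only [prec, colOp, Prod.smul_mk, Prod.mk_add_mk, smul_eq_mul, Prod.mk_sub_mk,
    Prod.mk.injEq]
  constructor <;> ring

theorem isNijenhuis_succ_colOp {b d : R} :
    IsNijenhuis succ (colOp (b + d, b) (0, d)) := by
  intro u v
  simp only [succ, colOp, Prod.smul_mk, Prod.mk_add_mk, smul_eq_mul, Prod.mk_sub_mk,
    Prod.mk.injEq]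
  constructor <;> ring

theorem isNijenhuis_prec_and_succ_iff [NoZeroDivisors R] (p q : R × R) :
    IsNijenhuis prec (colOp p q) ∧ IsNijenhuis succ (colOp p q) ↔
      ∃ b d : R, p = (b + d) • (1, 0) + b • (0, 1) ∧ q = d • (0, 1) := by
  constructor
  · rintro ⟨hprec, hsucc⟩
    obtain ⟨hq, hp⟩ := eq_of_isNijenhuis hprec hsucc
    exact ⟨p.2, q.2, by ext <;> simp [hp], by ext <;> simp [hq]⟩
  · rintro ⟨b, d, rfl, rfl⟩
    simp only [Prod.smul_mk, smul_eq_mul, mul_one, mul_zero, Prod.mk_add_mk, add_zero, zero_add]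
    exact ⟨isNijenhuis_prec_colOp, isNijenhuis_succ_colOp⟩

end Dend28

theorem stmt_17
    (l r : (ℂ × ℂ) →ₗ[ℂ] (ℂ × ℂ) →ₗ[ℂ] (ℂ × ℂ))
    (P : (ℂ × ℂ) →ₗ[ℂ] (ℂ × ℂ))
    (e₁ e₂ : ℂ × ℂ)
    (he₁ : e₁ = (1, 0)) (he₂ : e₂ = (0, 1))
    (hl11 : l e₁ e₁ = e₁ + e₂)
    (hl12 : l e₁ e₂ = -e₂)
    (hl21 : l e₂ e₁ = 0)
    (hl22 : l e₂ e₂ = e₂)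
    (hr11 : r e₁ e₁ = -e₂)
    (hr12 : r e₁ e₂ = e₂)
    (hr21 : r e₂ e₁ = 0)
    (hr22 : r e₂ e₂ = 0) :
    (∀ u v : ℂ × ℂ,
        l (P u) (P v) = P (l (P u) v + l u (P v) - P (l u v)) ∧
        r (P u) (P v) = P (r (P u) v + r u (P v) - P (r u v))) ↔
      (∃ b d : ℂ, P e₁ = (b + d) • e₁ + b • e₂ ∧ P e₂ = d • e₂) := by
  subst he₁ he₂
  have hl : (fun u v => l u v) = Dend28.prec := by
    funext u v
    rw [l.apply₂_eq_sum_smul, hl11, hl12, hl21, hl22]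
    ext <;> simp [Dend28.prec]
    ring
  have hr : (fun u v => r u v) = Dend28.succ := by
    funext u v
    rw [r.apply₂_eq_sum_smul, hr11, hr12, hr21, hr22]
    ext <;> simp [Dend28.succ]
    ring
  have hP : ⇑P = colOp (P (1, 0)) (P (0, 1)) := funext P.apply_eq_fst_smul_add_snd_smul
  have key := Dend28.isNijenhuis_prec_and_succ_iff (P (1, 0)) (P (0, 1))
  rw [← hl, ← hr, ← hP] at key
  simpa only [IsNijenhuis, forall_and] using key
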